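/- Let 𝒜 be a countably infinite set of atoms, T a set of truth values containing two distinct elements, and 𝒱 the set of all functions from 𝒜 to T (valuations, identified with their atom assignments). Let 𝒩 be the set of all symmetric, Hamming-inequality-respecting, liberally identity-respecting, liberally positive, liberally triangle-inequality-respecting distance operators on 𝒫(𝒱), and let 𝒪 be any set of distance operators on 𝒫(𝒱) with 𝒩 ⊆ 𝒪. Then there does not exist a normal characterization of 𝒪. -/

import Mathlib

/-- `lt` is a strict total order on `C`. -/
def StrictTotalOrder' {C : Type*} (lt : C → C → Prop) : Prop :=
  (∀ c, ¬ lt c c) ∧ (∀ a b c, lt a b → lt b c → lt a c) ∧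
  (∀ a b, a ≠ b → lt a b ∨ lt b a)

/-- The operator induced by a pseudo-distance `⟨C, lt, d⟩`. -/
def inducedOp {𝒱 C : Type*} (lt : C → C → Prop) (d : 𝒱 → 𝒱 → C)
    (A B : Set 𝒱) : Set 𝒱 :=
  {w ∈ B | ∃ v ∈ A, ∀ v' ∈ A, ∀ w' ∈ B, lt (d v w) (d v' w') ∨ d v w = d v' w'}

/-- `op` is a distance operator: it is induced by some pseudo-distance. -/
def IsDistanceOp {𝒱 : Type*} (op : Set 𝒱 → Set 𝒱 → Set 𝒱) : Prop :=
  ∃ (C : Type*) (lt : C → C → Prop) (d : 𝒱 → 𝒱 → C),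
    Nonempty C ∧ StrictTotalOrder' lt ∧ op = inducedOp lt d

/-- The set of atoms on which two valuations differ. -/
def hamSet {𝒜 T : Type*} (v w : 𝒜 → T) : Set 𝒜 := {p | v p ≠ w p}

/-- `op` is a symmetric, Hamming-inequality-respecting, liberally identity-respecting,
liberally positive, liberally triangle-inequality-respecting distance operator.
The costs are `ℝ ∪ {∞}` (modelled by `WithTop ℝ`), ordered by the usual order on `ℝ` with
`∞` strictly above every real. -/
def IsLiberalHamDistanceOp {𝒜 T : Type*}
    (op : Set (𝒜 → T) → Set (𝒜 → T) → Set (𝒜 → T)) : Prop :=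
  ∃ d : (𝒜 → T) → (𝒜 → T) → WithTop ℝ,
    (∀ v w, d v w = d w v) ∧
    (∀ v w x, Cardinal.mk (hamSet v w) < Cardinal.mk (hamSet v x) → d v w < d v x) ∧
    (∀ v w, d v w = 0 ↔ v = w) ∧
    (∀ v w, 0 ≤ d v w) ∧
    (∀ v w x, (d v x ≠ ⊤ → d v w ≠ ⊤ → d w x ≠ ⊤ → d v x ≤ d v w + d w x) ∧
      (d v x = ⊤ → d v w = ⊤ ∨ d w x = ⊤)) ∧
    op = inducedOp (· < ·) d

/-- There exists a normal characterization of `O`. -/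
def HasNormalCharacterization {𝒱 : Type*} (O : Set (Set 𝒱 → Set 𝒱 → Set 𝒱)) : Prop :=
  ∃ (n : ℕ), 0 < n ∧
    ∃ Φ : (Fin n → Set 𝒱) → (Fin n → Set 𝒱) → (Fin n → Set 𝒱) → Prop,
      ∀ op : Set 𝒱 → Set 𝒱 → Set 𝒱,
        op ∈ O ↔ ∀ Vs Ws : Fin n → Set 𝒱, Φ Vs Ws (fun i => op (Vs i) (Ws i))

namespace Stmt1Proof

open Classical in
/-- Basic valuation family: `GG e t0 t1 M m` is `t1` exactly on atoms whose code is `≡ m [MOD M]`. -/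
noncomputable def GG {𝒜 T : Type*} (e : 𝒜 ≃ ℕ) (t0 t1 : T) (M m : ℕ) : 𝒜 → T :=
  fun p => if e p % M = m then t1 else t0

section Basic

variable {𝒜 T : Type*} (e : 𝒜 ≃ ℕ) {t0 t1 : T} (ht : t0 ≠ t1)

lemma hamSet_comm (v w : 𝒜 → T) : hamSet v w = hamSet w v := by
  ext p; exact ne_comm

lemma hamSet_sub (v w x : 𝒜 → T) : hamSet v x ⊆ hamSet v w ∪ hamSet w x := by
  intro p hp
  by_cases h : v p = w p
  · exact Or.inr (fun hc => hp (h.trans hc))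
  · exact Or.inl h

lemma hamSet_nonempty {v w : 𝒜 → T} (h : v ≠ w) : (hamSet v w).Nonempty := by
  rcases Function.ne_iff.mp h with ⟨p, hp⟩
  exact ⟨p, hp⟩

include ht in
lemma GG_ne {M m m' : ℕ} (hm : m < M) (hne : m ≠ m') :
    GG e t0 t1 M m ≠ GG e t0 t1 M m' := by
  intro h
  have h2 := congrFun h (e.symm m)
  simp [GG, Equiv.apply_symm_apply, Nat.mod_eq_of_lt hm, hne] at h2
  exact ht h2.symm

include ht in
lemma GG_ham_inf {M m m' : ℕ} (hm : m < M) (hne : m ≠ m') :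
    (hamSet (GG e t0 t1 M m) (GG e t0 t1 M m')).Infinite := by
  apply Set.infinite_of_injective_forall_mem (f := fun k : ℕ => e.symm (m + M * k))
  case hi =>
    intro a b hab
    have h3 := e.symm.injective hab
    have hM : 0 < M := by omega
    have h4 : M * a = M * b := by omega
    exact Nat.eq_of_mul_eq_mul_left hM h4
  case hf =>
    intro k
    have hcode : e (e.symm (m + M * k)) = m + M * k := e.apply_symm_apply _
    have hmod : (m + M * k) % M = m := by
      rw [Nat.add_mul_mod_self_left, Nat.mod_eq_of_lt hm]
    show GG e t0 t1 M m _ ≠ GG e t0 t1 M m' _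
    simpa [GG, hcode, hmod, hne] using ht.symm

end Basic

section ZModFacts

variable {N : ℕ}

lemma zmod_cast_ne (hN : 6 ≤ N) {c : ℕ} (h1 : 0 < c) (h2 : c < N) : ((c : ZMod N)) ≠ 0 := by
  intro hc
  rw [ZMod.natCast_eq_zero_iff] at hc
  have := Nat.le_of_dvd h1 hc
  omega

lemma zmod_one_ne (hN : 6 ≤ N) : (1 : ZMod N) ≠ 0 := by
  have := zmod_cast_ne hN (c := 1) (by omega) (by omega)
  simpa using this

lemma zmod_two_ne (hN : 6 ≤ N) : (2 : ZMod N) ≠ 0 := by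
  have := zmod_cast_ne hN (c := 2) (by omega) (by omega)
  simpa using this

lemma zmod_three_ne (hN : 6 ≤ N) : (3 : ZMod N) ≠ 0 := by
  have := zmod_cast_ne hN (c := 3) (by omega) (by omega)
  simpa using this

lemma zmod_succ_ne (hN : 6 ≤ N) (i : ZMod N) : i + 1 ≠ i := by
  intro h
  have : (1 : ZMod N) = 0 := by
    have := congrArg (· - i) h
    simpa [add_comm, add_sub_cancel_right] using this
  exact zmod_one_ne hN this

end ZModFacts


section Family

variable {𝒜 T : Type*} {N : ℕ}

/-- Diagonal pairs `{A i, X i}`. -/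
def Diag (A X : ZMod N → (𝒜 → T)) (v w : 𝒜 → T) : Prop :=
  ∃ i : ZMod N, (v = A i ∧ w = X i) ∨ (v = X i ∧ w = A i)

/-- Adjacent pairs `{A i, X (i±1)}`. -/
def AdjP (A X : ZMod N → (𝒜 → T)) (v w : 𝒜 → T) : Prop :=
  ∃ i : ZMod N, (v = A i ∧ (w = X (i + 1) ∨ w = X (i - 1))) ∨
    (v = X i ∧ (w = A (i + 1) ∨ w = A (i - 1)))

open Classical in
noncomputable def dIdx (A X : ZMod N → (𝒜 → T)) (v w : 𝒜 → T) : ZMod N :=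
  if h : Diag A X v w then h.choose else 0

def posIdx (j i : ZMod N) : ℕ := if i = j then N else (i - j).val

noncomputable def vv (j i : ZMod N) : ℝ := 23 / 10 - (posIdx j i : ℝ) * (1 / (10 * N))

open Classical in
noncomputable def EE (A X : ZMod N → (𝒜 → T)) (j : ZMod N) (v w : 𝒜 → T) : ℝ :=
  if Diag A X v w then vv j (dIdx A X v w) else if AdjP A X v w then 12 / 5 else 2

open Classical in
noncomputable def rdist {𝒜 T : Type*} (E : (𝒜 → T) → (𝒜 → T) → ℝ) (v w : 𝒜 → T) : ℝ :=
  if v = w then 0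
  else if (hamSet v w).Finite then 1 - 1 / ((hamSet v w).ncard + 1)
  else E v w

noncomputable def dd {𝒜 T : Type*} (E : (𝒜 → T) → (𝒜 → T) → ℝ) (v w : 𝒜 → T) : WithTop ℝ :=
  ((rdist E v w : ℝ) : WithTop ℝ)

variable {A X : ZMod N → (𝒜 → T)} {v w : 𝒜 → T} {i j k : ZMod N}

lemma diag_symm (h : Diag A X v w) : Diag A X w v := by
  rcases h with ⟨i, ⟨h1, h2⟩ | ⟨h1, h2⟩⟩
  · exact ⟨i, Or.inr ⟨h2, h1⟩⟩
  · exact ⟨i, Or.inl ⟨h2, h1⟩⟩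

lemma adj_symm (h : AdjP A X v w) : AdjP A X w v := by
  rcases h with ⟨i, ⟨h1, h2 | h2⟩ | ⟨h1, h2 | h2⟩⟩
  · exact ⟨i + 1, Or.inr ⟨h2, Or.inr (by rw [h1, add_sub_cancel_right])⟩⟩
  · exact ⟨i - 1, Or.inr ⟨h2, Or.inl (by rw [h1, sub_add_cancel])⟩⟩
  · exact ⟨i + 1, Or.inl ⟨h2, Or.inr (by rw [h1, add_sub_cancel_right])⟩⟩
  · exact ⟨i - 1, Or.inl ⟨h2, Or.inl (by rw [h1, sub_add_cancel])⟩⟩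

section withInj

variable (hA : Function.Injective A) (hX : Function.Injective X)
  (hAX : ∀ i k : ZMod N, A i ≠ X k)

include hA hX hAX

lemma dIdx_eq (h : (v = A i ∧ w = X i) ∨ (v = X i ∧ w = A i)) : dIdx A X v w = i := by
  have hd : Diag A X v w := ⟨i, h⟩
  rw [dIdx, dif_pos hd]
  rcases hd.choose_spec with ⟨h1, h2⟩ | ⟨h1, h2⟩ <;> rcases h with ⟨g1, g2⟩ | ⟨g1, g2⟩
  · exact hA (h1.symm.trans g1)
  · exact absurd (h1.symm.trans g1) (hAX _ _)
  · exact absurd (g1.symm.trans h1) (hAX _ _)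
  · exact hX (h1.symm.trans g1)

lemma not_diag_AX (hik : i ≠ k) : ¬ Diag A X (A i) (X k) := by
  rintro ⟨t, ⟨h1, h2⟩ | ⟨h1, h2⟩⟩
  · exact hik ((hA h1).trans (hX h2).symm)
  · exact hAX i t h1

lemma not_diag_XA (hik : i ≠ k) : ¬ Diag A X (X i) (A k) := by
  rintro ⟨t, ⟨h1, h2⟩ | ⟨h1, h2⟩⟩
  · exact hAX t i h1.symm
  · exact hik ((hX h1).trans (hA h2).symm)

omit hA hX in
lemma not_diag_AA : ¬ Diag A X (A i) (A k) := by
  rintro ⟨t, ⟨h1, h2⟩ | ⟨h1, h2⟩⟩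
  · exact hAX k t h2
  · exact hAX i t h1

omit hA hX in
lemma not_diag_XX : ¬ Diag A X (X i) (X k) := by
  rintro ⟨t, ⟨h1, h2⟩ | ⟨h1, h2⟩⟩
  · exact hAX t i h1.symm
  · exact hAX t k h2.symm

lemma not_adj_AX (h1 : k ≠ i + 1) (h2 : k ≠ i - 1) : ¬ AdjP A X (A i) (X k) := by
  rintro ⟨t, ⟨g1, g2 | g2⟩ | ⟨g1, g2⟩⟩
  · exact h1 (by rw [hX g2, hA g1])
  · exact h2 (by rw [hX g2, hA g1])
  · exact hAX i t g1

lemma not_adj_XA (h1 : k ≠ i + 1) (h2 : k ≠ i - 1) : ¬ AdjP A X (X i) (A k) := by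
  rintro ⟨t, ⟨g1, g2⟩ | ⟨g1, g2 | g2⟩⟩
  · exact hAX t i g1.symm
  · exact h1 (by rw [hA g2, hX g1])
  · exact h2 (by rw [hA g2, hX g1])

omit hA hX in
lemma not_adj_AA : ¬ AdjP A X (A i) (A k) := by
  rintro ⟨t, ⟨g1, g2 | g2⟩ | ⟨g1, g2⟩⟩
  · exact hAX k _ g2
  · exact hAX k _ g2
  · exact hAX i t g1

omit hA hX in
lemma not_adj_XX : ¬ AdjP A X (X i) (X k) := by
  rintro ⟨t, ⟨g1, g2⟩ | ⟨g1, g2 | g2⟩⟩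
  · exact hAX t i g1.symm
  · exact hAX _ k g2.symm
  · exact hAX _ k g2.symm

end withInj

end Family


section Vals

variable {𝒜 T : Type*} {N : ℕ} [NeZero N] {A X : ZMod N → (𝒜 → T)} {v w : 𝒜 → T} {i j k : ZMod N}

lemma zmod_pred_ne (hN6 : 6 ≤ N) (i : ZMod N) : i - 1 ≠ i := by
  intro h
  exact zmod_succ_ne hN6 i (sub_eq_iff_eq_add.mp h).symm

lemma posIdx_pos (hN6 : 6 ≤ N) : 1 ≤ posIdx j i := by
  rw [posIdx]
  split
  · omega
  · rename_i h
    have h1 : i - j ≠ 0 := sub_ne_zero.mpr h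
    exact Nat.pos_of_ne_zero fun h0 => h1 ((ZMod.val_eq_zero _).mp h0)

lemma posIdx_le : posIdx j i ≤ N := by
  rw [posIdx]
  split
  · exact le_rfl
  · exact le_of_lt (ZMod.val_lt _)

lemma posIdx_lt (hij : i ≠ j) : posIdx j i < N := by
  rw [posIdx, if_neg hij]
  exact ZMod.val_lt _

lemma posIdx_succ (hN6 : 6 ≤ N) (hij : i ≠ j) : posIdx j i < posIdx j (i + 1) := by
  by_cases h1 : i + 1 = j
  · rw [show posIdx j (i+1) = N by rw [posIdx, if_pos h1]]
    exact posIdx_lt hij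
  · rw [show posIdx j (i+1) = (i + 1 - j).val by rw [posIdx, if_neg h1], posIdx, if_neg hij]
    have e1 : i + 1 - j = (i - j) + 1 := by ring
    rw [e1]
    have hu0 : i - j ≠ 0 := sub_ne_zero.mpr hij
    have hu1 : (i - j) + 1 ≠ 0 := by
      rw [← e1]
      exact sub_ne_zero.mpr h1
    have hvo : (1 : ZMod N).val = 1 := by
      rw [ZMod.val_one_eq_one_mod, Nat.mod_eq_of_lt (by omega)]
    have hadd : ((i - j) + 1).val = ((i - j).val + 1) % N := by
      rw [ZMod.val_add, hvo]
    have hlt : (i - j).val < N := ZMod.val_lt _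
    rcases Nat.lt_or_ge ((i - j).val + 1) N with h2 | h2
    · rw [hadd, Nat.mod_eq_of_lt h2]
      omega
    · exfalso
      have h3 : (i - j).val + 1 = N := by omega
      have h4 : ((i - j) + 1).val = 0 := by rw [hadd, h3, Nat.mod_self]
      exact hu1 ((ZMod.val_eq_zero _).mp h4)

lemma inv10N_pos (hN6 : 6 ≤ N) : (0:ℝ) < 1 / (10 * N) := by
  have : (0:ℝ) < N := by
    have : (6:ℝ) ≤ N := by exact_mod_cast hN6
    linarith
  positivity

lemma vv_lt (hN6 : 6 ≤ N) : vv j i < 23 / 10 := by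
  have h1 := posIdx_pos (j := j) (i := i) hN6
  have h2 := inv10N_pos (N := N) hN6
  have h3 : (1:ℝ) ≤ (posIdx j i : ℝ) := by exact_mod_cast h1
  rw [vv]
  nlinarith

lemma vv_ge (hN6 : 6 ≤ N) : 11 / 5 ≤ vv j i := by
  have h1 := posIdx_le (j := j) (i := i)
  have h3 : ((posIdx j i : ℝ)) ≤ (N : ℝ) := by exact_mod_cast h1
  have hNpos : (0:ℝ) < N := by
    have : (6:ℝ) ≤ N := by exact_mod_cast hN6
    linarith
  rw [vv]
  have h4 : (posIdx j i : ℝ) * (1 / (10 * N)) ≤ (N : ℝ) * (1 / (10 * N)) := by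
    apply mul_le_mul_of_nonneg_right h3 (le_of_lt (inv10N_pos hN6))
  have h5 : (N : ℝ) * (1 / (10 * N)) = 1 / 10 := by
    field_simp
  linarith

lemma vv_gt_two (hN6 : 6 ≤ N) : 2 < vv j i := lt_of_lt_of_le (by norm_num) (vv_ge hN6)

lemma vv_lt_b (hN6 : 6 ≤ N) : vv j i < 12 / 5 := lt_trans (vv_lt hN6) (by norm_num)

lemma vv_step (hN6 : 6 ≤ N) (hij : i ≠ j) : vv j (i + 1) < vv j i := by
  have h1 := posIdx_succ (j := j) hN6 hij
  have h2 := inv10N_pos (N := N) hN6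
  have h3 : (posIdx j i : ℝ) < (posIdx j (i+1) : ℝ) := by exact_mod_cast h1
  rw [vv, vv]
  nlinarith

lemma EE_ge_two (hN6 : 6 ≤ N) {A X : ZMod N → (𝒜 → T)} {v w : 𝒜 → T} :
    2 ≤ EE A X j v w := by
  rw [EE]
  split
  · exact le_of_lt (vv_gt_two hN6)
  · split
    · norm_num
    · norm_num

lemma EE_le_52 (hN6 : 6 ≤ N) {A X : ZMod N → (𝒜 → T)} {v w : 𝒜 → T} :
    EE A X j v w ≤ 5 / 2 := by
  rw [EE]
  split
  · have := vv_lt (j := j) (i := dIdx A X v w) hN6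
    linarith
  · split
    · norm_num
    · norm_num

section EEVals

variable (hA : Function.Injective A) (hX : Function.Injective X)
  (hAX : ∀ i k : ZMod N, A i ≠ X k)
  (hinf : ∀ i k : ZMod N, (hamSet (A i) (X k)).Infinite)

include hA hX hAX

lemma EE_diag_AX : EE A X j (A i) (X i) = vv j i := by
  rw [EE, if_pos ⟨i, Or.inl ⟨rfl, rfl⟩⟩, dIdx_eq hA hX hAX (Or.inl ⟨rfl, rfl⟩)]

lemma EE_diag_XA : EE A X j (X i) (A i) = vv j i := by
  rw [EE, if_pos ⟨i, Or.inr ⟨rfl, rfl⟩⟩, dIdx_eq hA hX hAX (Or.inr ⟨rfl, rfl⟩)]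

omit hA hX hAX in
lemma EE_adj (h : AdjP A X v w) (hnd : ¬ Diag A X v w) : EE A X j v w = 12 / 5 := by
  rw [EE, if_neg hnd, if_pos h]

omit hA hX hAX in
lemma EE_other (h1 : ¬ Diag A X v w) (h2 : ¬ AdjP A X v w) : EE A X j v w = 2 := by
  rw [EE, if_neg h1, if_neg h2]

lemma adj_not_diag (hN6 : 6 ≤ N) (h : AdjP A X v w) : ¬ Diag A X v w := by
  rcases h with ⟨t, ⟨h1, h2 | h2⟩ | ⟨h1, h2 | h2⟩⟩ <;> subst h1 <;> subst h2
  · exact not_diag_AX hA hX hAX (zmod_succ_ne hN6 t).symm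
  · exact not_diag_AX hA hX hAX (zmod_pred_ne hN6 t).symm
  · exact not_diag_XA hA hX hAX (zmod_succ_ne hN6 t).symm
  · exact not_diag_XA hA hX hAX (zmod_pred_ne hN6 t).symm

lemma EE_symm (hN6 : 6 ≤ N) (v w : 𝒜 → T) : EE A X j v w = EE A X j w v := by
  by_cases hd : Diag A X v w
  · rw [EE, if_pos hd, EE, if_pos (diag_symm hd)]
    rcases hd with ⟨i, h⟩
    rw [dIdx_eq hA hX hAX h]
    rcases h with ⟨h1, h2⟩ | ⟨h1, h2⟩
    · rw [dIdx_eq hA hX hAX (Or.inr ⟨h2, h1⟩)]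
    · rw [dIdx_eq hA hX hAX (Or.inl ⟨h2, h1⟩)]
  · have hd2 : ¬ Diag A X w v := fun hc => hd (diag_symm hc)
    by_cases ha : AdjP A X v w
    · rw [EE_adj ha hd, EE_adj (adj_symm ha) hd2]
    · have ha2 : ¬ AdjP A X w v := fun hc => ha (adj_symm hc)
      rw [EE_other hd ha, EE_other hd2 ha2]

end EEVals

section RdistVals

variable {E : (𝒜 → T) → (𝒜 → T) → ℝ}

lemma rdist_self : rdist E v v = 0 := by rw [rdist, if_pos rfl]

lemma rdist_symm (hE : ∀ v w, E v w = E w v) : rdist E v w = rdist E w v := by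
  by_cases h : v = w
  · subst h; rfl
  · rw [rdist, rdist, if_neg h, if_neg (Ne.symm h), hamSet_comm w v]
    split
    · rfl
    · exact hE v w

lemma rdist_nonneg (h2 : ∀ v w, 2 ≤ E v w) : 0 ≤ rdist E v w := by
  rw [rdist]
  split
  · exact le_rfl
  split
  · rename_i h hf
    have hc : (0:ℝ) < ((hamSet v w).ncard : ℝ) + 1 := by positivity
    have : 1 / (((hamSet v w).ncard : ℝ) + 1) ≤ 1 := by
      rw [div_le_one hc]
      have : (0:ℝ) ≤ ((hamSet v w).ncard : ℝ) := Nat.cast_nonneg _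
      linarith
    linarith
  · linarith [h2 v w]

lemma rdist_half (h2 : ∀ v w, 2 ≤ E v w) (hvw : v ≠ w) : 1 / 2 ≤ rdist E v w := by
  rw [rdist, if_neg hvw]
  split
  · rename_i hf
    have hne := hamSet_nonempty hvw
    have hpos : 0 < (hamSet v w).ncard := (Set.ncard_pos hf).mpr hne
    have hc : (2:ℝ) ≤ ((hamSet v w).ncard : ℝ) + 1 := by
      have : (1:ℝ) ≤ ((hamSet v w).ncard : ℝ) := by exact_mod_cast hpos
      linarith
    have := one_div_le_one_div_of_le (by norm_num : (0:ℝ) < 2) hc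
    linarith
  · linarith [h2 v w]

lemma rdist_lt_two_of_finite (hf : (hamSet v w).Finite) : rdist E v w < 2 := by
  rw [rdist]
  have hc : (0:ℝ) < ((hamSet v w).ncard : ℝ) + 1 := by positivity
  have h2 : 0 < 1 / (((hamSet v w).ncard : ℝ) + 1) := by positivity
  split
  · norm_num
  · linarith

end RdistVals

section RdistFam

variable (hA : Function.Injective A) (hX : Function.Injective X)
  (hAX : ∀ i k : ZMod N, A i ≠ X k)
  (hinf : ∀ i k : ZMod N, (hamSet (A i) (X k)).Infinite)

include hAX hinf

lemma rdist_AX : rdist (EE A X j) (A i) (X k) = EE A X j (A i) (X k) := by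
  rw [rdist, if_neg (hAX i k), if_neg (hinf i k)]

lemma rdist_XA : rdist (EE A X j) (X i) (A k) = EE A X j (X i) (A k) := by
  have h1 : hamSet (X i) (A k) = hamSet (A k) (X i) := hamSet_comm _ _
  rw [rdist, if_neg (Ne.symm (hAX k i)), h1, if_neg (hinf k i)]

include hA hX

lemma rd_diag1 : rdist (EE A X j) (A i) (X i) = vv j i := by
  rw [rdist_AX hAX hinf, EE_diag_AX hA hX hAX]

lemma rd_diag2 : rdist (EE A X j) (X i) (A i) = vv j i := by
  rw [rdist_XA hAX hinf, EE_diag_XA hA hX hAX]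

lemma rd_adj1 (hN6 : 6 ≤ N) : rdist (EE A X j) (A i) (X (i + 1)) = 12 / 5 := by
  rw [rdist_AX hAX hinf]
  exact EE_adj ⟨i, Or.inl ⟨rfl, Or.inl rfl⟩⟩ (not_diag_AX hA hX hAX (zmod_succ_ne hN6 i).symm)

lemma rd_adj2 (hN6 : 6 ≤ N) : rdist (EE A X j) (A (i + 1)) (X i) = 12 / 5 := by
  rw [rdist_AX hAX hinf]
  refine EE_adj ⟨i + 1, Or.inl ⟨rfl, Or.inr (by rw [add_sub_cancel_right])⟩⟩ ?_
  exact not_diag_AX hA hX hAX (zmod_succ_ne hN6 i)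

lemma rd_adj3 (hN6 : 6 ≤ N) : rdist (EE A X j) (X i) (A (i + 1)) = 12 / 5 := by
  rw [rdist_XA hAX hinf]
  refine EE_adj ⟨i, Or.inr ⟨rfl, Or.inl rfl⟩⟩ ?_
  exact not_diag_XA hA hX hAX (zmod_succ_ne hN6 i).symm

lemma rd_adj4 (hN6 : 6 ≤ N) : rdist (EE A X j) (X (i + 1)) (A i) = 12 / 5 := by
  rw [rdist_XA hAX hinf]
  refine EE_adj ⟨i + 1, Or.inr ⟨rfl, Or.inr (by rw [add_sub_cancel_right])⟩⟩ ?_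
  exact not_diag_XA hA hX hAX (zmod_succ_ne hN6 i)

omit hA hX hAX hinf in
lemma rdist_eq_of_not_diag (j j' : ZMod N) (hnd : ¬ Diag A X v w) :
    rdist (EE A X j) v w = rdist (EE A X j') v w := by
  rw [rdist, rdist]
  split
  · rfl
  split
  · rfl
  · rw [EE, if_neg hnd, EE, if_neg hnd]

lemma diag_rd_ge (hN6 : 6 ≤ N) (h : Diag A X v w) : 11 / 5 ≤ rdist (EE A X j) v w := by
  rcases h with ⟨i, ⟨h1, h2⟩ | ⟨h1, h2⟩⟩ <;> subst h1 <;> subst h2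
  · rw [rd_diag1 hA hX hAX hinf]; exact vv_ge hN6
  · rw [rd_diag2 hA hX hAX hinf]; exact vv_ge hN6

lemma diag_rd_lt (hN6 : 6 ≤ N) (h : Diag A X v w) : rdist (EE A X j) v w < 23 / 10 := by
  rcases h with ⟨i, ⟨h1, h2⟩ | ⟨h1, h2⟩⟩ <;> subst h1 <;> subst h2
  · rw [rd_diag1 hA hX hAX hinf]; exact vv_lt hN6
  · rw [rd_diag2 hA hX hAX hinf]; exact vv_lt hN6

omit hA hX hAX hinf in
lemma two_lt_cases (h : 2 < rdist (EE A X j) v w) : Diag A X v w ∨ AdjP A X v w := by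
  by_contra hc
  push_neg at hc
  rw [rdist] at h
  split at h
  · norm_num at h
  split at h
  · rename_i h1 h2
    have hc2 : (0:ℝ) < 1 / (((hamSet v w).ncard : ℝ) + 1) := by positivity
    linarith
  · rw [EE, if_neg hc.1, if_neg hc.2] at h
    norm_num at h

lemma adj_rd (hN6 : 6 ≤ N) (h : AdjP A X v w) : rdist (EE A X j) v w = 12 / 5 := by
  rcases h with ⟨t, ⟨h1, h2 | h2⟩ | ⟨h1, h2 | h2⟩⟩ <;> subst h1 <;> subst h2
  · exact rd_adj1 hA hX hAX hinf hN6
  · have e : t = (t - 1) + 1 := by ring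
    rw [e]
    have e2 : t - 1 + 1 - 1 = t - 1 := by ring
    rw [e2]
    exact rd_adj2 hA hX hAX hinf hN6
  · exact rd_adj3 hA hX hAX hinf hN6
  · have e : t = (t - 1) + 1 := by ring
    rw [e]
    have e2 : t - 1 + 1 - 1 = t - 1 := by ring
    rw [e2]
    exact rd_adj4 hA hX hAX hinf hN6

end RdistFam

end Vals


section Liberal

variable {𝒜 T : Type*} {E : (𝒜 → T) → (𝒜 → T) → ℝ} {V W : Set (𝒜 → T)} {v w : 𝒜 → T}

lemma rdist_fin (h : v ≠ w) (hf : (hamSet v w).Finite) :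
    rdist E v w = 1 - 1 / ((hamSet v w).ncard + 1) := by
  rw [rdist, if_neg h, if_pos hf]

lemma rdist_inf (h : v ≠ w) (hf : ¬ (hamSet v w).Finite) : rdist E v w = E v w := by
  rw [rdist, if_neg h, if_neg hf]

lemma rdist_lt_one_of_finite (hf : (hamSet v w).Finite) : rdist E v w < 1 := by
  have hc : (0:ℝ) < ((hamSet v w).ncard : ℝ) + 1 := by positivity
  have h2 : 0 < 1 / (((hamSet v w).ncard : ℝ) + 1) := by positivity
  by_cases h : v = w
  · rw [rdist, if_pos h]; norm_num
  · rw [rdist_fin h hf]; linarith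

lemma memInd : w ∈ inducedOp (· < ·) (dd E) V W ↔
    w ∈ W ∧ ∃ v ∈ V, ∀ v' ∈ V, ∀ w' ∈ W, rdist E v w ≤ rdist E v' w' := by
  simp only [inducedOp, dd, Set.mem_sep_iff, Set.mem_setOf_eq, WithTop.coe_lt_coe,
    WithTop.coe_eq_coe, ← le_iff_lt_or_eq]

variable [Countable 𝒜]

lemma liberal (hsym : ∀ v w : 𝒜 → T, E v w = E w v) (h2 : ∀ v w, 2 ≤ E v w)
    (h52 : ∀ v w, E v w ≤ 5 / 2) :
    IsLiberalHamDistanceOp (inducedOp (· < ·) (dd E)) := by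
  refine ⟨dd E, ?_, ?_, ?_, ?_, ?_, rfl⟩
  · intro v w
    rw [dd, dd, rdist_symm hsym]
  · -- Hamming respecting
    intro v w x hlt
    rw [dd, dd, WithTop.coe_lt_coe]
    by_cases hfx : (hamSet v x).Finite
    · have hmkx : Cardinal.mk (hamSet v x) < Cardinal.aleph0 :=
        Cardinal.lt_aleph0_iff_set_finite.mpr hfx
      have hfw : (hamSet v w).Finite :=
        Cardinal.lt_aleph0_iff_set_finite.mp (hlt.trans hmkx)
      have hnc : (hamSet v w).ncard < (hamSet v x).ncard := by
        have h3 := Cardinal.toNat_lt_toNat hlt hmkx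
        rw [← Nat.card_coe_set_eq, ← Nat.card_coe_set_eq]
        exact h3
      have hvx : v ≠ x := by
        intro h
        subst h
        have he : hamSet v v = ∅ := by ext p; simp [hamSet]
        rw [he, Set.ncard_empty] at hnc
        omega
      rw [rdist_fin hvx hfx]
      have hcx1 : 1 ≤ (hamSet v x).ncard := by omega
      have hcxR : (1:ℝ) ≤ ((hamSet v x).ncard : ℝ) := by exact_mod_cast hcx1
      by_cases hvw : v = w
      · rw [rdist, if_pos hvw]
        have : 1 / (((hamSet v x).ncard : ℝ) + 1) < 1 := by
          rw [div_lt_one (by positivity)]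
          linarith
        linarith
      · rw [rdist_fin hvw hfw]
        have hm : ((hamSet v w).ncard : ℝ) < ((hamSet v x).ncard : ℝ) := by exact_mod_cast hnc
        have : 1 / (((hamSet v x).ncard : ℝ) + 1) < 1 / (((hamSet v w).ncard : ℝ) + 1) := by
          apply one_div_lt_one_div_of_lt (by positivity)
          linarith
        linarith
    · have hvx : v ≠ x := by
        intro h
        subst h
        apply hfx
        have he : hamSet v v = ∅ := by ext p; simp [hamSet]
        rw [he]
        exact Set.finite_empty
      have hfw : (hamSet v w).Finite := by
        apply Cardinal.lt_aleph0_iff_set_finite.mp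
        exact lt_of_lt_of_le hlt Cardinal.mk_le_aleph0
      have hl : rdist E v w < 1 := rdist_lt_one_of_finite hfw
      rw [rdist_inf hvx hfx]
      linarith [h2 v x]
  · -- identity
    intro v w
    constructor
    · intro h
      by_contra hvw
      have h1 := rdist_half h2 hvw
      rw [dd, ← WithTop.coe_zero, WithTop.coe_eq_coe] at h
      linarith
    · intro h
      subst h
      rw [dd, rdist_self, WithTop.coe_zero]
  · -- positivity
    intro v w
    rw [dd, ← WithTop.coe_zero, WithTop.coe_le_coe]
    exact rdist_nonneg h2
  · -- triangle
    intro v w x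
    constructor
    · intro _ _ _
      rw [dd, dd, dd, ← WithTop.coe_add, WithTop.coe_le_coe]
      by_cases hvx : v = x
      · subst hvx
        rw [rdist_self]
        exact add_nonneg (rdist_nonneg h2) (rdist_nonneg h2)
      by_cases hvw : v = w
      · subst hvw
        rw [rdist_self]
        linarith
      by_cases hwx : w = x
      · subst hwx
        rw [rdist_self (v := w)]
        linarith
      · by_cases hf : (hamSet v x).Finite
        · have hl := rdist_lt_one_of_finite (E := E) hf
          have ha := rdist_half h2 hvw
          have hb := rdist_half h2 hwx
          linarith
        · rw [rdist_inf hvx hf]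
          have hone : ¬ (hamSet v w).Finite ∨ ¬ (hamSet w x).Finite := by
            by_contra hc
            push_neg at hc
            exact hf (Set.Finite.subset (hc.1.union hc.2) (hamSet_sub v w x))
          rcases hone with hi | hi
          · rw [rdist_inf hvw hi]
            have hb := rdist_half h2 hwx
            have := h2 v w
            have := h52 v x
            linarith
          · rw [rdist_inf hwx hi]
            have ha := rdist_half h2 hvw
            have := h2 w x
            have := h52 v x
            linarith
    · intro h
      rw [dd] at h
      exact absurd h (WithTop.coe_ne_top)

end Liberal


section Compute

variable {𝒜 T : Type*} {N : ℕ} [NeZero N] {A X : ZMod N → (𝒜 → T)} {i j : ZMod N}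
variable (hA : Function.Injective A) (hX : Function.Injective X)
  (hAX : ∀ i k : ZMod N, A i ≠ X k)
  (hinf : ∀ i k : ZMod N, (hamSet (A i) (X k)).Infinite)
  (hN6 : 6 ≤ N)

include hA hX hAX hinf hN6

lemma compQ : inducedOp (· < ·) (dd (EE A X j)) {A i} ({X i, X (i + 1)}) = {X i} := by
  ext w
  rw [memInd, Set.mem_singleton_iff]
  constructor
  · rintro ⟨hw, v, hv, hmin⟩
    rw [Set.mem_singleton_iff] at hv
    subst hv
    rcases (Set.mem_insert_iff.mp hw) with hw | hw
    · exact hw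
    · rw [Set.mem_singleton_iff] at hw
      subst hw
      exfalso
      have h1 := hmin (A i) rfl (X i) (Set.mem_insert _ _)
      rw [rd_adj1 hA hX hAX hinf hN6, rd_diag1 hA hX hAX hinf] at h1
      have h3 := vv_lt_b (j := j) (i := i) hN6
      linarith
  · intro hw
    subst hw
    refine ⟨Set.mem_insert _ _, A i, rfl, ?_⟩
    intro v' hv' w' hw'
    rw [Set.mem_singleton_iff] at hv'
    subst hv'
    rcases (Set.mem_insert_iff.mp hw') with h | h
    · subst h
      exact le_rfl
    · rw [Set.mem_singleton_iff] at h
      subst h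
      rw [rd_diag1 hA hX hAX hinf, rd_adj1 hA hX hAX hinf hN6]
      exact le_of_lt (vv_lt_b hN6)

lemma compP (hij : i ≠ j) :
    inducedOp (· < ·) (dd (EE A X j)) ({A i, A (i + 1)}) ({X i, X (i + 1)}) = {X (i + 1)} := by
  have hstep := vv_step (j := j) (i := i) hN6 hij
  have hb1 := vv_lt_b (j := j) (i := i) hN6
  have hb2 := vv_lt_b (j := j) (i := i + 1) hN6
  ext w
  rw [memInd, Set.mem_singleton_iff]
  constructor
  · rintro ⟨hw, v, hv, hmin⟩
    rcases (Set.mem_insert_iff.mp hw) with hw | hw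
    · subst hw
      exfalso
      rcases (Set.mem_insert_iff.mp hv) with hv | hv
      · subst hv
        have h1 := hmin (A (i + 1)) (Set.mem_insert_of_mem _ rfl) (X (i + 1))
          (Set.mem_insert_of_mem _ rfl)
        rw [rd_diag1 hA hX hAX hinf, rd_diag1 hA hX hAX hinf] at h1
        linarith
      · rw [Set.mem_singleton_iff] at hv
        subst hv
        have h1 := hmin (A i) (Set.mem_insert _ _) (X i) (Set.mem_insert _ _)
        rw [rd_adj2 hA hX hAX hinf hN6, rd_diag1 hA hX hAX hinf] at h1
        linarith
    · rw [Set.mem_singleton_iff] at hw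
      exact hw
  · intro hw
    subst hw
    refine ⟨Set.mem_insert_of_mem _ rfl, A (i + 1), Set.mem_insert_of_mem _ rfl, ?_⟩
    intro v' hv' w' hw'
    rcases (Set.mem_insert_iff.mp hv') with h | h
    · subst h
      rcases (Set.mem_insert_iff.mp hw') with h | h
      · subst h
        rw [rd_diag1 hA hX hAX hinf, rd_diag1 hA hX hAX hinf]
        linarith
      · rw [Set.mem_singleton_iff] at h
        subst h
        rw [rd_diag1 hA hX hAX hinf, rd_adj1 hA hX hAX hinf hN6]
        linarith
    · rw [Set.mem_singleton_iff] at h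
      subst h
      rcases (Set.mem_insert_iff.mp hw') with h | h
      · subst h
        rw [rd_diag1 hA hX hAX hinf, rd_adj2 hA hX hAX hinf hN6]
        linarith
      · rw [Set.mem_singleton_iff] at h
        subst h
        exact le_rfl

lemma compP' (hij : i ≠ j) :
    inducedOp (· < ·) (dd (EE A X j)) ({X i, X (i + 1)}) ({A i, A (i + 1)}) = {A (i + 1)} := by
  have hstep := vv_step (j := j) (i := i) hN6 hij
  have hb1 := vv_lt_b (j := j) (i := i) hN6
  have hb2 := vv_lt_b (j := j) (i := i + 1) hN6
  ext w
  rw [memInd, Set.mem_singleton_iff]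
  constructor
  · rintro ⟨hw, v, hv, hmin⟩
    rcases (Set.mem_insert_iff.mp hw) with hw | hw
    · subst hw
      exfalso
      rcases (Set.mem_insert_iff.mp hv) with hv | hv
      · subst hv
        have h1 := hmin (X (i + 1)) (Set.mem_insert_of_mem _ rfl) (A (i + 1))
          (Set.mem_insert_of_mem _ rfl)
        rw [rd_diag2 hA hX hAX hinf, rd_diag2 hA hX hAX hinf] at h1
        linarith
      · rw [Set.mem_singleton_iff] at hv
        subst hv
        have h1 := hmin (X i) (Set.mem_insert _ _) (A i) (Set.mem_insert _ _)
        rw [rd_adj4 hA hX hAX hinf hN6, rd_diag2 hA hX hAX hinf] at h1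
        linarith
    · rw [Set.mem_singleton_iff] at hw
      exact hw
  · intro hw
    subst hw
    refine ⟨Set.mem_insert_of_mem _ rfl, X (i + 1), Set.mem_insert_of_mem _ rfl, ?_⟩
    intro v' hv' w' hw'
    rcases (Set.mem_insert_iff.mp hv') with h | h
    · subst h
      rcases (Set.mem_insert_iff.mp hw') with h | h
      · subst h
        rw [rd_diag2 hA hX hAX hinf, rd_diag2 hA hX hAX hinf]
        linarith
      · rw [Set.mem_singleton_iff] at h
        subst h
        rw [rd_diag2 hA hX hAX hinf, rd_adj3 hA hX hAX hinf hN6]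
        linarith
    · rw [Set.mem_singleton_iff] at h
      subst h
      rcases (Set.mem_insert_iff.mp hw') with h | h
      · subst h
        rw [rd_diag2 hA hX hAX hinf, rd_adj4 hA hX hAX hinf hN6]
        linarith
      · rw [Set.mem_singleton_iff] at h
        subst h
        exact le_rfl

end Compute


section Indep

variable {𝒜 T : Type*} {N : ℕ} [NeZero N] {A X : ZMod N → (𝒜 → T)} {i j j' : ZMod N}
variable (hA : Function.Injective A) (hX : Function.Injective X)
  (hAX : ∀ i k : ZMod N, A i ≠ X k)
  (hinf : ∀ i k : ZMod N, (hamSet (A i) (X k)).Infinite)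
  (hN6 : 6 ≤ N)

include hA hX hAX

lemma pair_with_X {u : 𝒜 → T} (hu : Diag A X u (X i) ∨ AdjP A X u (X i)) :
    u = A i ∨ u = A (i + 1) ∨ u = A (i - 1) := by
  rcases hu with ⟨t, ⟨h1, h2⟩ | ⟨h1, h2⟩⟩ | ⟨t, ⟨h1, h2 | h2⟩ | ⟨h1, h2 | h2⟩⟩
  · have ht : t = i := (hX h2).symm
    subst ht
    exact Or.inl h1
  · exact absurd h2.symm (hAX t i)
  · have ht : t = i - 1 := by
      have h3 : i = t + 1 := hX h2
      rw [h3, add_sub_cancel_right]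
    subst ht
    exact Or.inr (Or.inr h1)
  · have ht : t = i + 1 := by
      have h3 : i = t - 1 := hX h2
      rw [h3, sub_add_cancel]
    subst ht
    exact Or.inr (Or.inl h1)
  · exact absurd h2.symm (hAX (t + 1) i)
  · exact absurd h2.symm (hAX (t - 1) i)

lemma pair_with_A {u : 𝒜 → T} (hu : Diag A X u (A i) ∨ AdjP A X u (A i)) :
    u = X i ∨ u = X (i + 1) ∨ u = X (i - 1) := by
  rcases hu with ⟨t, ⟨h1, h2⟩ | ⟨h1, h2⟩⟩ | ⟨t, ⟨h1, h2 | h2⟩ | ⟨h1, h2 | h2⟩⟩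
  · exact absurd h2 (hAX i t)
  · have ht : t = i := (hA h2).symm
    subst ht
    exact Or.inl h1
  · exact absurd h2 (hAX i (t + 1))
  · exact absurd h2 (hAX i (t - 1))
  · have ht : t = i - 1 := by
      have h3 : i = t + 1 := hA h2
      rw [h3, add_sub_cancel_right]
    subst ht
    exact Or.inr (Or.inr h1)
  · have ht : t = i + 1 := by
      have h3 : i = t - 1 := hA h2
      rw [h3, sub_add_cancel]
    subst ht
    exact Or.inr (Or.inl h1)

include hinf hN6

lemma indep_orient1 (V W : Set (𝒜 → T)) (w₀ v₀ : 𝒜 → T) (i : ZMod N)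
    (hPex : ∀ m : ZMod N, ¬ (V = ({A m, A (m + 1)} : Set (𝒜 → T)) ∧
      W = ({X m, X (m + 1)} : Set (𝒜 → T))))
    (hp : A i ∈ V) (hq : X i ∈ W) (hw0 : w₀ ∈ W) (hv0 : v₀ ∈ V)
    (hmin : ∀ v' ∈ V, ∀ w' ∈ W, rdist (EE A X j) v₀ w₀ ≤ rdist (EE A X j) v' w')
    (hall : ∀ v' ∈ V, ∀ w' ∈ W, Diag A X v' w' ∨ AdjP A X v' w') :
    w₀ ∈ W ∧ ∃ v ∈ V, ∀ v' ∈ V, ∀ w' ∈ W, rdist (EE A X j') v w₀ ≤ rdist (EE A X j') v' w' := by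
  have hVsub : ∀ u ∈ V, ∀ k : ZMod N, X k ∈ W →
      (u = A k ∨ u = A (k + 1) ∨ u = A (k - 1)) := by
    intro u hu k hk
    exact pair_with_X hA hX hAX (hall u hu (X k) hk)
  have hWsub : ∀ u ∈ W, ∀ k : ZMod N, A k ∈ V →
      (u = X k ∨ u = X (k + 1) ∨ u = X (k - 1)) := by
    intro u hu k hk
    exact pair_with_A hA hX hAX ((hall (A k) hk u hu).imp diag_symm adj_symm)
  have huniq : ∀ k : ZMod N, A k ∈ V → X k ∈ W → k = i := by
    intro k hAk hXk
    by_contra hki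
    rcases hVsub (A k) hAk i hq with h | h | h
    · exact hki (hA h)
    · have hk : k = i + 1 := hA h
      subst hk
      apply hPex i
      constructor
      · ext u
        simp only [Set.mem_insert_iff, Set.mem_singleton_iff]
        constructor
        · intro hu
          rcases hVsub u hu i hq with g | g | g
          · exact Or.inl g
          · exact Or.inr g
          · exfalso
            rcases hVsub u hu (i + 1) hXk with f | f | f
            · rw [g] at f
              have h4 : i - 1 = i + 1 := hA f
              exact zmod_two_ne hN6 (by linear_combination - h4)
            · rw [g] at f
              have h4 : i - 1 = i + 1 + 1 := hA f
              exact zmod_three_ne hN6 (by linear_combination - h4)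
            · rw [g] at f
              have h4 : i - 1 = i + 1 - 1 := hA f
              rw [add_sub_cancel_right] at h4
              exact zmod_pred_ne hN6 i h4
        · rintro (rfl | rfl)
          · exact hp
          · exact hAk
      · ext u
        simp only [Set.mem_insert_iff, Set.mem_singleton_iff]
        constructor
        · intro hu
          rcases hWsub u hu i hp with g | g | g
          · exact Or.inl g
          · exact Or.inr g
          · exfalso
            rcases hWsub u hu (i + 1) hAk with f | f | f
            · rw [g] at f
              have h4 : i - 1 = i + 1 := hX f
              exact zmod_two_ne hN6 (by linear_combination - h4)
            · rw [g] at f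
              have h4 : i - 1 = i + 1 + 1 := hX f
              exact zmod_three_ne hN6 (by linear_combination - h4)
            · rw [g] at f
              have h4 : i - 1 = i + 1 - 1 := hX f
              rw [add_sub_cancel_right] at h4
              exact zmod_pred_ne hN6 i h4
        · rintro (rfl | rfl)
          · exact hq
          · exact hXk
    · have hk : k = i - 1 := hA h
      subst hk
      apply hPex (i - 1)
      rw [sub_add_cancel]
      constructor
      · ext u
        simp only [Set.mem_insert_iff, Set.mem_singleton_iff]
        constructor
        · intro hu
          rcases hVsub u hu i hq with g | g | g
          · exact Or.inr g
          · exfalso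
            rcases hVsub u hu (i - 1) hXk with f | f | f
            · rw [g] at f
              have h4 : i + 1 = i - 1 := hA f
              exact zmod_two_ne hN6 (by linear_combination h4)
            · rw [g] at f
              have h4 : i + 1 = i - 1 + 1 := hA f
              rw [sub_add_cancel] at h4
              exact zmod_succ_ne hN6 i h4
            · rw [g] at f
              have h4 : i + 1 = i - 1 - 1 := hA f
              exact zmod_three_ne hN6 (by linear_combination h4)
          · exact Or.inl g
        · rintro (rfl | rfl)
          · exact hAk
          · exact hp
      · ext u
        simp only [Set.mem_insert_iff, Set.mem_singleton_iff]
        constructor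
        · intro hu
          rcases hWsub u hu i hp with g | g | g
          · exact Or.inr g
          · exfalso
            rcases hWsub u hu (i - 1) hAk with f | f | f
            · rw [g] at f
              have h4 : i + 1 = i - 1 := hX f
              exact zmod_two_ne hN6 (by linear_combination h4)
            · rw [g] at f
              have h4 : i + 1 = i - 1 + 1 := hX f
              rw [sub_add_cancel] at h4
              exact zmod_succ_ne hN6 i h4
            · rw [g] at f
              have h4 : i + 1 = i - 1 - 1 := hX f
              exact zmod_three_ne hN6 (by linear_combination h4)
          · exact Or.inl g
        · rintro (rfl | rfl)
          · exact hXk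
          · exact hq
  have hent : ∀ v' ∈ V, ∀ w' ∈ W, (v' = A i ∧ w' = X i) ∨
      (rdist (EE A X j) v' w' = 12 / 5 ∧ rdist (EE A X j') v' w' = 12 / 5) := by
    intro v' hv' w' hw'
    rcases hall v' hv' w' hw' with hd | ha
    · rcases hd with ⟨m, ⟨g1, g2⟩ | ⟨g1, g2⟩⟩
      · have hm : m = i := huniq m (g1 ▸ hv') (g2 ▸ hw')
        subst hm
        exact Or.inl ⟨g1, g2⟩
      · exfalso
        have hc := hall v' hv' (X i) hq
        rw [g1] at hc
        rcases hc with hc | hc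
        · exact not_diag_XX hAX hc
        · exact not_adj_XX hAX hc
    · exact Or.inr ⟨adj_rd hA hX hAX hinf hN6 ha, adj_rd hA hX hAX hinf hN6 ha⟩
  have hkey := hmin (A i) hp (X i) hq
  rw [rd_diag1 hA hX hAX hinf] at hkey
  rcases hent v₀ hv0 w₀ hw0 with ⟨e1, e2⟩ | ⟨e3, _⟩
  · subst e2
    refine ⟨hw0, A i, hp, ?_⟩
    intro v' hv' w' hw'
    rw [rd_diag1 hA hX hAX hinf]
    rcases hent v' hv' w' hw' with ⟨f1, f2⟩ | ⟨_, f3⟩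
    · rw [f1, f2, rd_diag1 hA hX hAX hinf]
    · rw [f3]
      exact le_of_lt (vv_lt_b hN6)
  · exfalso
    rw [e3] at hkey
    have h5 := vv_lt_b (j := j) (i := i) hN6
    linarith

lemma indep_orient2 (V W : Set (𝒜 → T)) (w₀ v₀ : 𝒜 → T) (i : ZMod N)
    (hP'ex : ∀ m : ZMod N, ¬ (V = ({X m, X (m + 1)} : Set (𝒜 → T)) ∧
      W = ({A m, A (m + 1)} : Set (𝒜 → T))))
    (hp : X i ∈ V) (hq : A i ∈ W) (hw0 : w₀ ∈ W) (hv0 : v₀ ∈ V)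
    (hmin : ∀ v' ∈ V, ∀ w' ∈ W, rdist (EE A X j) v₀ w₀ ≤ rdist (EE A X j) v' w')
    (hall : ∀ v' ∈ V, ∀ w' ∈ W, Diag A X v' w' ∨ AdjP A X v' w') :
    w₀ ∈ W ∧ ∃ v ∈ V, ∀ v' ∈ V, ∀ w' ∈ W, rdist (EE A X j') v w₀ ≤ rdist (EE A X j') v' w' := by
  have hVsub : ∀ u ∈ V, ∀ k : ZMod N, A k ∈ W →
      (u = X k ∨ u = X (k + 1) ∨ u = X (k - 1)) := by
    intro u hu k hk
    exact pair_with_A hA hX hAX (hall u hu (A k) hk)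
  have hWsub : ∀ u ∈ W, ∀ k : ZMod N, X k ∈ V →
      (u = A k ∨ u = A (k + 1) ∨ u = A (k - 1)) := by
    intro u hu k hk
    exact pair_with_X hA hX hAX ((hall (X k) hk u hu).imp diag_symm adj_symm)
  have huniq : ∀ k : ZMod N, X k ∈ V → A k ∈ W → k = i := by
    intro k hXk hAk
    by_contra hki
    rcases hVsub (X k) hXk i hq with h | h | h
    · exact hki (hX h)
    · have hk : k = i + 1 := hX h
      subst hk
      apply hP'ex i
      constructor
      · ext u
        simp only [Set.mem_insert_iff, Set.mem_singleton_iff]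
        constructor
        · intro hu
          rcases hVsub u hu i hq with g | g | g
          · exact Or.inl g
          · exact Or.inr g
          · exfalso
            rcases hVsub u hu (i + 1) hAk with f | f | f
            · rw [g] at f
              have h4 : i - 1 = i + 1 := hX f
              exact zmod_two_ne hN6 (by linear_combination - h4)
            · rw [g] at f
              have h4 : i - 1 = i + 1 + 1 := hX f
              exact zmod_three_ne hN6 (by linear_combination - h4)
            · rw [g] at f
              have h4 : i - 1 = i + 1 - 1 := hX f
              rw [add_sub_cancel_right] at h4
              exact zmod_pred_ne hN6 i h4
        · rintro (rfl | rfl)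
          · exact hp
          · exact hXk
      · ext u
        simp only [Set.mem_insert_iff, Set.mem_singleton_iff]
        constructor
        · intro hu
          rcases hWsub u hu i hp with g | g | g
          · exact Or.inl g
          · exact Or.inr g
          · exfalso
            rcases hWsub u hu (i + 1) hXk with f | f | f
            · rw [g] at f
              have h4 : i - 1 = i + 1 := hA f
              exact zmod_two_ne hN6 (by linear_combination - h4)
            · rw [g] at f
              have h4 : i - 1 = i + 1 + 1 := hA f
              exact zmod_three_ne hN6 (by linear_combination - h4)
            · rw [g] at f
              have h4 : i - 1 = i + 1 - 1 := hA f
              rw [add_sub_cancel_right] at h4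
              exact zmod_pred_ne hN6 i h4
        · rintro (rfl | rfl)
          · exact hq
          · exact hAk
    · have hk : k = i - 1 := hX h
      subst hk
      apply hP'ex (i - 1)
      rw [sub_add_cancel]
      constructor
      · ext u
        simp only [Set.mem_insert_iff, Set.mem_singleton_iff]
        constructor
        · intro hu
          rcases hVsub u hu i hq with g | g | g
          · exact Or.inr g
          · exfalso
            rcases hVsub u hu (i - 1) hAk with f | f | f
            · rw [g] at f
              have h4 : i + 1 = i - 1 := hX f
              exact zmod_two_ne hN6 (by linear_combination h4)
            · rw [g] at f
              have h4 : i + 1 = i - 1 + 1 := hX f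
              rw [sub_add_cancel] at h4
              exact zmod_succ_ne hN6 i h4
            · rw [g] at f
              have h4 : i + 1 = i - 1 - 1 := hX f
              exact zmod_three_ne hN6 (by linear_combination h4)
          · exact Or.inl g
        · rintro (rfl | rfl)
          · exact hXk
          · exact hp
      · ext u
        simp only [Set.mem_insert_iff, Set.mem_singleton_iff]
        constructor
        · intro hu
          rcases hWsub u hu i hp with g | g | g
          · exact Or.inr g
          · exfalso
            rcases hWsub u hu (i - 1) hXk with f | f | f
            · rw [g] at f
              have h4 : i + 1 = i - 1 := hA f
              exact zmod_two_ne hN6 (by linear_combination h4)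
            · rw [g] at f
              have h4 : i + 1 = i - 1 + 1 := hA f
              rw [sub_add_cancel] at h4
              exact zmod_succ_ne hN6 i h4
            · rw [g] at f
              have h4 : i + 1 = i - 1 - 1 := hA f
              exact zmod_three_ne hN6 (by linear_combination h4)
          · exact Or.inl g
        · rintro (rfl | rfl)
          · exact hAk
          · exact hq
  have hent : ∀ v' ∈ V, ∀ w' ∈ W, (v' = X i ∧ w' = A i) ∨
      (rdist (EE A X j) v' w' = 12 / 5 ∧ rdist (EE A X j') v' w' = 12 / 5) := by
    intro v' hv' w' hw'
    rcases hall v' hv' w' hw' with hd | ha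
    · rcases hd with ⟨m, ⟨g1, g2⟩ | ⟨g1, g2⟩⟩
      · exfalso
        have hc := hall v' hv' (A i) hq
        rw [g1] at hc
        rcases hc with hc | hc
        · exact not_diag_AA hAX hc
        · exact not_adj_AA hAX hc
      · have hm : m = i := huniq m (g1 ▸ hv') (g2 ▸ hw')
        subst hm
        exact Or.inl ⟨g1, g2⟩
    · exact Or.inr ⟨adj_rd hA hX hAX hinf hN6 ha, adj_rd hA hX hAX hinf hN6 ha⟩
  have hkey := hmin (X i) hp (A i) hq
  rw [rd_diag2 hA hX hAX hinf] at hkey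
  rcases hent v₀ hv0 w₀ hw0 with ⟨e1, e2⟩ | ⟨e3, _⟩
  · subst e2
    refine ⟨hw0, X i, hp, ?_⟩
    intro v' hv' w' hw'
    rw [rd_diag2 hA hX hAX hinf]
    rcases hent v' hv' w' hw' with ⟨f1, f2⟩ | ⟨_, f3⟩
    · rw [f1, f2, rd_diag2 hA hX hAX hinf]
    · rw [f3]
      exact le_of_lt (vv_lt_b hN6)
  · exfalso
    rw [e3] at hkey
    have h5 := vv_lt_b (j := j) (i := i) hN6
    linarith

lemma indep_mem (V W : Set (𝒜 → T)) (w₀ : 𝒜 → T)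
    (hPex : ∀ m : ZMod N, ¬ (V = ({A m, A (m + 1)} : Set (𝒜 → T)) ∧
      W = ({X m, X (m + 1)} : Set (𝒜 → T))))
    (hP'ex : ∀ m : ZMod N, ¬ (V = ({X m, X (m + 1)} : Set (𝒜 → T)) ∧
      W = ({A m, A (m + 1)} : Set (𝒜 → T))))
    (hmem : w₀ ∈ inducedOp (· < ·) (dd (EE A X j)) V W) :
    w₀ ∈ inducedOp (· < ·) (dd (EE A X j')) V W := by
  rw [memInd] at hmem ⊢
  obtain ⟨hw0, v₀, hv0, hmin⟩ := hmem
  by_cases hle : rdist (EE A X j) v₀ w₀ ≤ 2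
  · have hnd : ¬ Diag A X v₀ w₀ := by
      intro hd
      have h1 := diag_rd_ge hA hX hAX hinf hN6 (j := j) hd
      linarith
    refine ⟨hw0, v₀, hv0, ?_⟩
    intro v' hv' w' hw'
    rw [← rdist_eq_of_not_diag j j' hnd]
    by_cases hd' : Diag A X v' w'
    · have h1 := diag_rd_ge hA hX hAX hinf hN6 (j := j') hd'
      linarith
    · rw [← rdist_eq_of_not_diag j j' hd']
      exact hmin v' hv' w' hw'
  · push_neg at hle
    have hall : ∀ v' ∈ V, ∀ w' ∈ W, Diag A X v' w' ∨ AdjP A X v' w' := by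
      intro v' hv' w' hw'
      exact two_lt_cases (lt_of_lt_of_le hle (hmin v' hv' w' hw'))
    by_cases hdiag : ∃ p ∈ V, ∃ q ∈ W, Diag A X p q
    · obtain ⟨p, hp, q, hq, hpq⟩ := hdiag
      rcases hpq with ⟨i, ⟨h1, h2⟩ | ⟨h1, h2⟩⟩
      · subst h1; subst h2
        exact indep_orient1 hA hX hAX hinf hN6 V W w₀ v₀ i hPex hp hq hw0 hv0 hmin hall
      · subst h1; subst h2
        exact indep_orient2 hA hX hAX hinf hN6 V W w₀ v₀ i hP'ex hp hq hw0 hv0 hmin hall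
    · push_neg at hdiag
      have hadj : ∀ v' ∈ V, ∀ w' ∈ W, AdjP A X v' w' := by
        intro v' hv' w' hw'
        rcases hall v' hv' w' hw' with hd | ha
        · exact absurd hd (hdiag v' hv' w' hw')
        · exact ha
      refine ⟨hw0, v₀, hv0, ?_⟩
      intro v' hv' w' hw'
      rw [adj_rd hA hX hAX hinf hN6 (hadj v₀ hv0 w₀ hw0),
        adj_rd hA hX hAX hinf hN6 (hadj v' hv' w' hw')]

lemma indep (V W : Set (𝒜 → T))
    (hPex : ∀ m : ZMod N, ¬ (V = ({A m, A (m + 1)} : Set (𝒜 → T)) ∧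
      W = ({X m, X (m + 1)} : Set (𝒜 → T))))
    (hP'ex : ∀ m : ZMod N, ¬ (V = ({X m, X (m + 1)} : Set (𝒜 → T)) ∧
      W = ({A m, A (m + 1)} : Set (𝒜 → T)))) :
    inducedOp (· < ·) (dd (EE A X j)) V W = inducedOp (· < ·) (dd (EE A X j')) V W := by
  ext w₀
  constructor
  · exact indep_mem hA hX hAX hinf hN6 V W w₀ hPex hP'ex
  · exact indep_mem hA hX hAX hinf hN6 V W w₀ hPex hP'ex

end Indep


section Pairs

variable {𝒜 T : Type*} {N : ℕ} [NeZero N] {A X F : ZMod N → (𝒜 → T)} {m k : ZMod N}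

lemma pair_inj (hF : Function.Injective F) (hN6 : 6 ≤ N)
    (h : ({F m, F (m + 1)} : Set (𝒜 → T)) = {F k, F (k + 1)}) : m = k := by
  have h1 : F m ∈ ({F k, F (k + 1)} : Set (𝒜 → T)) := by
    rw [← h]; exact Set.mem_insert _ _
  have h2 : F k ∈ ({F m, F (m + 1)} : Set (𝒜 → T)) := by
    rw [h]; exact Set.mem_insert _ _
  simp only [Set.mem_insert_iff, Set.mem_singleton_iff] at h1 h2
  rcases h1 with h1 | h1
  · exact hF h1
  · rcases h2 with h2 | h2
    · exact (hF h2).symm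
    · exfalso
      have e1 : m = k + 1 := hF h1
      have e2 : k = m + 1 := hF h2
      have : (2 : ZMod N) = 0 := by linear_combination - e1 - e2
      exact zmod_two_ne hN6 this

lemma pair_cross (hAX : ∀ i k : ZMod N, A i ≠ X k) :
    ({A m, A (m + 1)} : Set (𝒜 → T)) ≠ {X k, X (k + 1)} := by
  intro h
  have h1 : A m ∈ ({X k, X (k + 1)} : Set (𝒜 → T)) := by
    rw [← h]; exact Set.mem_insert _ _
  simp only [Set.mem_insert_iff, Set.mem_singleton_iff] at h1
  rcases h1 with h1 | h1
  · exact hAX m k h1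
  · exact hAX m (k + 1) h1

lemma singl_ne_pairA (hA : Function.Injective A) (hN6 : 6 ≤ N) {u : 𝒜 → T} :
    ({u} : Set (𝒜 → T)) ≠ {A k, A (k + 1)} := by
  intro h
  have h1 : A k ∈ ({u} : Set (𝒜 → T)) := by rw [h]; exact Set.mem_insert _ _
  have h2 : A (k + 1) ∈ ({u} : Set (𝒜 → T)) := by
    rw [h]; exact Set.mem_insert_of_mem _ rfl
  rw [Set.mem_singleton_iff] at h1 h2
  exact zmod_succ_ne hN6 k (hA (h2.trans h1.symm))

lemma singlA_ne_pairX (hAX : ∀ i k : ZMod N, A i ≠ X k) {i : ZMod N} :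
    ({A i} : Set (𝒜 → T)) ≠ {X k, X (k + 1)} := by
  intro h
  have h1 : X k ∈ ({A i} : Set (𝒜 → T)) := by rw [h]; exact Set.mem_insert _ _
  rw [Set.mem_singleton_iff] at h1
  exact hAX i k h1.symm

end Pairs

end Stmt1Proof

open Stmt1Proof

theorem stmt1 {𝒜 T : Type*} [Countable 𝒜] [Infinite 𝒜]
    (t0 t1 : T) (ht : t0 ≠ t1)
    (O : Set (Set (𝒜 → T) → Set (𝒜 → T) → Set (𝒜 → T)))
    (hO : ∀ op ∈ O, IsDistanceOp op)
    (hN : ∀ op, IsLiberalHamDistanceOp op → op ∈ O) :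
    ¬ HasNormalCharacterization O := by
  rintro ⟨n, hn, Φ, hΦ⟩
  classical
  obtain ⟨den⟩ := nonempty_denumerable 𝒜
  let e : 𝒜 ≃ ℕ := den.eqv
  set N : ℕ := n + 6 with hNdef
  haveI : NeZero N := ⟨by omega⟩
  have hN6 : 6 ≤ N := by omega
  obtain ⟨A, hA_def⟩ : ∃ f : ZMod N → (𝒜 → T), f = fun i => GG e t0 t1 (2 * N) i.val :=
    ⟨_, rfl⟩
  obtain ⟨X, hX_def⟩ : ∃ f : ZMod N → (𝒜 → T), f = fun i => GG e t0 t1 (2 * N) (N + i.val) :=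
    ⟨_, rfl⟩
  have hvlt : ∀ i : ZMod N, i.val < N := fun i => ZMod.val_lt i
  have hAinj : Function.Injective A := by
    intro a b hab
    by_contra hne
    rw [hA_def] at hab
    exact GG_ne e ht (show a.val < 2 * N by have := hvlt a; omega)
      (fun hv => hne (ZMod.val_injective N hv)) hab
  have hXinj : Function.Injective X := by
    intro a b hab
    by_contra hne
    rw [hX_def] at hab
    refine GG_ne e ht (show N + a.val < 2 * N by have := hvlt a; omega) ?_ hab
    intro hv
    exact hne (ZMod.val_injective N (by omega))
  have hAX : ∀ i k : ZMod N, A i ≠ X k := by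
    intro i k
    rw [hA_def, hX_def]
    exact GG_ne e ht (show i.val < 2 * N by have := hvlt i; omega)
      (show i.val ≠ N + k.val by have := hvlt i; omega)
  have hinf : ∀ i k : ZMod N, (hamSet (A i) (X k)).Infinite := by
    intro i k
    rw [hA_def, hX_def]
    exact GG_ham_inf e ht (show i.val < 2 * N by have := hvlt i; omega)
      (show i.val ≠ N + k.val by have := hvlt i; omega)
  -- the rogue operator
  obtain ⟨Op, hOp_def⟩ : ∃ f : Set (𝒜 → T) → Set (𝒜 → T) → Set (𝒜 → T),
      f = fun V W =>
        if V = ({A 0, A (0 + 1)} : Set (𝒜 → T)) ∧ W = ({X 0, X (0 + 1)} : Set (𝒜 → T)) then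
          ({X (0 + 1)} : Set (𝒜 → T))
        else if V = ({X 0, X (0 + 1)} : Set (𝒜 → T)) ∧ W = ({A 0, A (0 + 1)} : Set (𝒜 → T)) then
          ({A (0 + 1)} : Set (𝒜 → T))
        else inducedOp (· < ·) (dd (EE A X 0)) V W := ⟨_, rfl⟩
  have hOpApp : ∀ V W : Set (𝒜 → T), Op V W =
      if V = ({A 0, A (0 + 1)} : Set (𝒜 → T)) ∧ W = ({X 0, X (0 + 1)} : Set (𝒜 → T)) then
        ({X (0 + 1)} : Set (𝒜 → T))
      else if V = ({X 0, X (0 + 1)} : Set (𝒜 → T)) ∧ W = ({A 0, A (0 + 1)} : Set (𝒜 → T)) then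
        ({A (0 + 1)} : Set (𝒜 → T))
      else inducedOp (· < ·) (dd (EE A X 0)) V W := by
    intro V W
    rw [hOp_def]
  have OpP : ∀ m : ZMod N,
      Op ({A m, A (m + 1)} : Set (𝒜 → T)) ({X m, X (m + 1)} : Set (𝒜 → T)) = {X (m + 1)} := by
    intro m
    rw [hOpApp]
    by_cases hm : m = 0
    · subst hm
      rw [if_pos ⟨rfl, rfl⟩]
    · have hc1 : ¬(({A m, A (m + 1)} : Set (𝒜 → T)) = {A 0, A (0 + 1)} ∧
          ({X m, X (m + 1)} : Set (𝒜 → T)) = {X 0, X (0 + 1)}) := by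
        rintro ⟨g1, -⟩
        exact hm (pair_inj hAinj hN6 g1)
      have hc2 : ¬(({A m, A (m + 1)} : Set (𝒜 → T)) = {X 0, X (0 + 1)} ∧
          ({X m, X (m + 1)} : Set (𝒜 → T)) = {A 0, A (0 + 1)}) := by
        rintro ⟨g1, -⟩
        exact pair_cross hAX g1
      rw [if_neg hc1, if_neg hc2]
      exact compP hAinj hXinj hAX hinf hN6 hm
  have OpP' : ∀ m : ZMod N,
      Op ({X m, X (m + 1)} : Set (𝒜 → T)) ({A m, A (m + 1)} : Set (𝒜 → T)) = {A (m + 1)} := by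
    intro m
    rw [hOpApp]
    have hc1 : ¬(({X m, X (m + 1)} : Set (𝒜 → T)) = {A 0, A (0 + 1)} ∧
        ({A m, A (m + 1)} : Set (𝒜 → T)) = {X 0, X (0 + 1)}) := by
      rintro ⟨g1, -⟩
      exact pair_cross hAX g1.symm
    rw [if_neg hc1]
    by_cases hm : m = 0
    · subst hm
      rw [if_pos ⟨rfl, rfl⟩]
    · have hc2 : ¬(({X m, X (m + 1)} : Set (𝒜 → T)) = {X 0, X (0 + 1)} ∧
          ({A m, A (m + 1)} : Set (𝒜 → T)) = {A 0, A (0 + 1)}) := by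
        rintro ⟨g1, -⟩
        exact hm (pair_inj hXinj hN6 g1)
      rw [if_neg hc2]
      exact compP' hAinj hXinj hAX hinf hN6 hm
  have OpQ : ∀ m : ZMod N,
      Op ({A m} : Set (𝒜 → T)) ({X m, X (m + 1)} : Set (𝒜 → T)) = {X m} := by
    intro m
    rw [hOpApp]
    have hc1 : ¬(({A m} : Set (𝒜 → T)) = {A 0, A (0 + 1)} ∧
        ({X m, X (m + 1)} : Set (𝒜 → T)) = {X 0, X (0 + 1)}) := by
      rintro ⟨g1, -⟩
      exact singl_ne_pairA hAinj hN6 g1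
    have hc2 : ¬(({A m} : Set (𝒜 → T)) = {X 0, X (0 + 1)} ∧
        ({X m, X (m + 1)} : Set (𝒜 → T)) = {A 0, A (0 + 1)}) := by
      rintro ⟨g1, -⟩
      exact singlA_ne_pairX hAX g1
    rw [if_neg hc1, if_neg hc2]
    exact compQ hAinj hXinj hAX hinf hN6
  have hOpElse : ∀ V W : Set (𝒜 → T),
      (∀ m : ZMod N, ¬(V = ({A m, A (m + 1)} : Set (𝒜 → T)) ∧
        W = ({X m, X (m + 1)} : Set (𝒜 → T)))) →
      (∀ m : ZMod N, ¬(V = ({X m, X (m + 1)} : Set (𝒜 → T)) ∧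
        W = ({A m, A (m + 1)} : Set (𝒜 → T)))) →
      Op V W = inducedOp (· < ·) (dd (EE A X 0)) V W := by
    intro V W h1 h2
    rw [hOpApp, if_neg (h1 0), if_neg (h2 0)]
  -- Op satisfies the characterization, hence is in O
  have hOpInO : Op ∈ O := by
    rw [hΦ Op]
    intro Vs Ws
    have hsafe : ∃ j : ZMod N, ∀ iF : Fin n,
        ¬((Vs iF = ({A j, A (j + 1)} : Set (𝒜 → T)) ∧
            Ws iF = ({X j, X (j + 1)} : Set (𝒜 → T))) ∨
          (Vs iF = ({X j, X (j + 1)} : Set (𝒜 → T)) ∧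
            Ws iF = ({A j, A (j + 1)} : Set (𝒜 → T)))) := by
      by_contra hcon
      push_neg at hcon
      choose F hF using hcon
      have Finj : Function.Injective F := by
        intro a b hab
        rcases hF a with ⟨h1, h2⟩ | ⟨h1, h2⟩ <;> rcases hF b with ⟨g1, g2⟩ | ⟨g1, g2⟩
        · rw [hab] at h1
          exact pair_inj hAinj hN6 (h1.symm.trans g1)
        · rw [hab] at h1
          exact absurd (h1.symm.trans g1) (pair_cross hAX)
        · rw [hab] at h1
          exact absurd (g1.symm.trans h1) (pair_cross hAX)
        · rw [hab] at h1
          exact pair_inj hXinj hN6 (h1.symm.trans g1)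
      have hcard := Fintype.card_le_of_injective F Finj
      rw [ZMod.card, Fintype.card_fin] at hcard
      omega
    obtain ⟨j, hj⟩ := hsafe
    have hLib : IsLiberalHamDistanceOp (inducedOp (· < ·) (dd (EE A X j))) :=
      liberal (fun v w => EE_symm hAinj hXinj hAX hN6 v w)
        (fun v w => EE_ge_two hN6) (fun v w => EE_le_52 hN6)
    have hOpj := hN _ hLib
    have hΦj := (hΦ _).mp hOpj Vs Ws
    have heqf : (fun iF : Fin n => Op (Vs iF) (Ws iF)) =
        fun iF => inducedOp (· < ·) (dd (EE A X j)) (Vs iF) (Ws iF) := by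
      funext iF
      by_cases hc1 : ∃ m : ZMod N, Vs iF = ({A m, A (m + 1)} : Set (𝒜 → T)) ∧
          Ws iF = ({X m, X (m + 1)} : Set (𝒜 → T))
      · obtain ⟨m, g1, g2⟩ := hc1
        have hmj : m ≠ j := by
          intro hc
          subst hc
          exact hj iF (Or.inl ⟨g1, g2⟩)
        rw [g1, g2, OpP m, compP hAinj hXinj hAX hinf hN6 hmj]
      · by_cases hc2 : ∃ m : ZMod N, Vs iF = ({X m, X (m + 1)} : Set (𝒜 → T)) ∧
            Ws iF = ({A m, A (m + 1)} : Set (𝒜 → T))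
        · obtain ⟨m, g1, g2⟩ := hc2
          have hmj : m ≠ j := by
            intro hc
            subst hc
            exact hj iF (Or.inr ⟨g1, g2⟩)
          rw [g1, g2, OpP' m, compP' hAinj hXinj hAX hinf hN6 hmj]
        · have h1' : ∀ m : ZMod N, ¬(Vs iF = ({A m, A (m + 1)} : Set (𝒜 → T)) ∧
              Ws iF = ({X m, X (m + 1)} : Set (𝒜 → T))) := fun m hm => hc1 ⟨m, hm⟩
          have h2' : ∀ m : ZMod N, ¬(Vs iF = ({X m, X (m + 1)} : Set (𝒜 → T)) ∧
              Ws iF = ({A m, A (m + 1)} : Set (𝒜 → T))) := fun m hm => hc2 ⟨m, hm⟩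
          rw [hOpElse _ _ h1' h2',
            indep hAinj hXinj hAX hinf hN6 (j := 0) (j' := j) _ _ h1' h2']
    rw [heqf]
    exact hΦj
  -- but Op is not a distance operator
  obtain ⟨C, lt, d, -, ⟨hirr, htr, htot⟩, hEq⟩ := hO Op hOpInO
  have hXne : ∀ m : ZMod N, X m ≠ X (m + 1) := by
    intro m hc
    exact zmod_succ_ne hN6 m (hXinj hc).symm
  have QLT : ∀ m : ZMod N, lt (d (A m) (X m)) (d (A m) (X (m + 1))) := by
    intro m
    have hQ := OpQ m
    rw [hEq] at hQ
    have hnm : X (m + 1) ∉ ({X m} : Set (𝒜 → T)) := by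
      rw [Set.mem_singleton_iff]
      exact fun hc => hXne m hc.symm
    rw [← hQ] at hnm
    simp only [inducedOp, Set.mem_sep_iff, Set.mem_setOf_eq] at hnm
    push_neg at hnm
    obtain ⟨v', hv', w', hw', hno⟩ := hnm (Set.mem_insert_of_mem _ rfl) (A m) rfl
    rw [Set.mem_singleton_iff] at hv'
    subst hv'
    rcases Set.mem_insert_iff.mp hw' with hw1 | hw1
    · subst hw1
      rcases htot _ _ hno.2 with h | h
      · exact absurd h hno.1
      · exact h
    · rw [Set.mem_singleton_iff] at hw1
      subst hw1
      exact absurd rfl hno.2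
  have PLT : ∀ m : ZMod N, lt (d (A (m + 1)) (X (m + 1))) (d (A m) (X m)) := by
    intro m
    have hP := OpP m
    rw [hEq] at hP
    have hm1 : X (m + 1) ∈ inducedOp lt d ({A m, A (m + 1)} : Set (𝒜 → T))
        ({X m, X (m + 1)} : Set (𝒜 → T)) := by
      rw [hP]
      exact rfl
    simp only [inducedOp, Set.mem_sep_iff, Set.mem_setOf_eq] at hm1
    obtain ⟨-, v, hv, hminP⟩ := hm1
    rcases Set.mem_insert_iff.mp hv with hv1 | hv1
    · subst hv1
      exfalso
      have h1 := hminP (A m) (Set.mem_insert _ _) (X m) (Set.mem_insert _ _)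
      have hq := QLT m
      rcases h1 with h1 | h1
      · exact hirr _ (htr _ _ _ h1 hq)
      · rw [h1] at hq
        exact hirr _ hq
    · rw [Set.mem_singleton_iff] at hv1
      subst hv1
      have h1 := hminP (A m) (Set.mem_insert _ _) (X m) (Set.mem_insert _ _)
      rcases h1 with h1 | h1
      · exact h1
      · exfalso
        have hmemXm : X m ∈ inducedOp lt d ({A m, A (m + 1)} : Set (𝒜 → T))
            ({X m, X (m + 1)} : Set (𝒜 → T)) := by
          simp only [inducedOp, Set.mem_sep_iff, Set.mem_setOf_eq]
          refine ⟨Set.mem_insert _ _, A m, Set.mem_insert _ _, ?_⟩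
          intro v' hv' w' hw'
          rw [← h1]
          exact hminP v' hv' w' hw'
        rw [hP, Set.mem_singleton_iff] at hmemXm
        exact hXne m hmemXm
  have hchain : ∀ k : ℕ,
      lt (d (A ((k + 1 : ℕ) : ZMod N)) (X ((k + 1 : ℕ) : ZMod N))) (d (A 0) (X 0)) := by
    intro k
    induction k with
    | zero =>
      have e0 : (((0 : ℕ) + 1 : ℕ) : ZMod N) = (0 : ZMod N) + 1 := by push_cast; ring
      rw [e0]
      exact PLT 0
    | succ k ih =>
      have hp := PLT (((k + 1 : ℕ) : ZMod N))
      have e1 : ((k + 1 + 1 : ℕ) : ZMod N) = ((k + 1 : ℕ) : ZMod N) + 1 := by push_cast; ring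
      rw [e1]
      exact htr _ _ _ hp ih
  have hfin := hchain (N - 1)
  have e2 : ((N - 1 + 1 : ℕ) : ZMod N) = 0 := by
    rw [Nat.sub_add_cancel (by omega : 1 ≤ N)]
    exact ZMod.natCast_self N
  rw [e2] at hfin
  exact hirr _ hfin
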